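/- Let f₂₁, f₂₂ : ℂ³ → ℂ be linearly independent linear forms and a, b ∈ ℂ with a ≠ 0, b ≠ 0 and a ≠ b; set f₁₁ = a·f₂₁ and f₁₂ = b·f₂₂. Then: (1) for (λ, μ) ∈ ℂ² ∖ {(0,0)}, the forms λ·f₁₁ + μ·f₂₁ and λ·f₁₂ + μ·f₂₂ are linearly dependent if and only if μ = −a·λ or μ = −b·λ (there are exactly two distinct developable directions); (2) the focal conic satisfies f₁₁·f₂₂ − f₁₂·f₂₁ = (a − b)·f₂₁·f₂₂, a nonzero product of two linearly independent linear forms (a pair of distinct lines); (3) for every (λ, μ) ∈ ℂ² ∖ {(0,0)} with μ ≠ −a·λ and μ ≠ −b·λ, the forms λ·f₁₁ + μ·f₂₁ and λ·f₁₂ + μ·f₂₂ are linearly independent and their common kernel equals ker f₂₁ ∩ ker f₂₂, a 1-dimensional subspace independent of (λ, μ) (the focal locus is the same single point, the singular point of the conic, for every nondevelopable direction). -/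

import Mathlib

/-! Along a direction `(l : m)` the two pencil members are `(l * a + m) • f₂₁` and
`(l * b + m) • f₂₂`, so they become dependent exactly when one coefficient vanishes, and otherwise
cut out `ker f₂₁ ⊓ ker f₂₂`, which has dimension `3 - 2` since it is the annihilator of the
plane spanned by `f₂₁, f₂₂` in the dual space. -/

open Module Submodule

section

variable {K V : Type*} [Field K] [AddCommGroup V] [Module K V]

theorem LinearIndependent.pair_smul_smul_iff_ne_zero {x y : V} (h : LinearIndependent K ![x, y])
    {c d : K} : LinearIndependent K ![c • x, d • y] ↔ c ≠ 0 ∧ d ≠ 0 := by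
  constructor
  · intro hcd
    refine ⟨fun hc => hcd.ne_zero 0 ?_, fun hd => hcd.ne_zero 1 ?_⟩ <;> simp [*]
  · rintro ⟨hc, hd⟩
    exact (pair_smul_smul_iff hc.isUnit hd.isUnit).2 h

theorem Submodule.dualCoannihilator_span_pair (f g : Dual K V) :
    (span K (Set.range ![f, g])).dualCoannihilator = LinearMap.ker f ⊓ LinearMap.ker g := by
  apply SetLike.ext'
  rw [coe_dualCoannihilator_span]
  ext x
  simp [and_comm]

theorem finrank_ker_inf_ker_add_two [FiniteDimensional K V] {f g : Dual K V}
    (h : LinearIndependent K ![f, g]) :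
    finrank K (LinearMap.ker f ⊓ LinearMap.ker g : Submodule K V) + 2 = finrank K V := by
  rw [← Subspace.finrank_add_finrank_dualCoannihilator_eq (span K (Set.range ![f, g])),
    finrank_span_eq_card h, dualCoannihilator_span_pair, Fintype.card_fin, add_comm]

end

theorem two_pencils_degenerate_beta_case_general
    (f₂₁ f₂₂ : (Fin 3 → ℂ) →ₗ[ℂ] ℂ)
    (hind : LinearIndependent ℂ ![f₂₁, f₂₂])
    (a b : ℂ) (hab : a ≠ b)
    (f₁₁ f₁₂ : (Fin 3 → ℂ) →ₗ[ℂ] ℂ)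
    (hf₁₁ : f₁₁ = a • f₂₁) (hf₁₂ : f₁₂ = b • f₂₂) :
    -- (1) exactly two distinct developable directions
    (∀ l m : ℂ, (l, m) ≠ ((0 : ℂ), (0 : ℂ)) →
      (¬ LinearIndependent ℂ ![l • f₁₁ + m • f₂₁, l • f₁₂ + m • f₂₂] ↔
        (m = -a * l ∨ m = -b * l))) ∧
    -- (2) the focal conic is a nonzero product of two independent linear forms
    ((∀ x : Fin 3 → ℂ,
        f₁₁ x * f₂₂ x - f₁₂ x * f₂₁ x = (a - b) * (f₂₁ x * f₂₂ x)) ∧ a - b ≠ 0) ∧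
    -- (3) for every other direction, the focal locus is the fixed singular point
    (∀ l m : ℂ, (l, m) ≠ ((0 : ℂ), (0 : ℂ)) → m ≠ -a * l → m ≠ -b * l →
      LinearIndependent ℂ ![l • f₁₁ + m • f₂₁, l • f₁₂ + m • f₂₂] ∧
      (LinearMap.ker (l • f₁₁ + m • f₂₁) ⊓ LinearMap.ker (l • f₁₂ + m • f₂₂) :
          Submodule ℂ (Fin 3 → ℂ))
        = LinearMap.ker f₂₁ ⊓ LinearMap.ker f₂₂ ∧
      Module.finrank ℂ
        ((LinearMap.ker f₂₁ ⊓ LinearMap.ker f₂₂) : Submodule ℂ (Fin 3 → ℂ)) = 1) := by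
  subst hf₁₁ hf₁₂
  have pencil (c l m : ℂ) (f : (Fin 3 → ℂ) →ₗ[ℂ] ℂ) : l • c • f + m • f = (l * c + m) • f := by
    rw [smul_smul, add_smul]
  have direction (c l m : ℂ) : m = -c * l ↔ l * c + m = 0 := by
    constructor <;> intro h <;> linear_combination h
  refine ⟨fun l m _ => ?_, ⟨fun x => ?_, sub_ne_zero.2 hab⟩, fun l m _ hma hmb => ?_⟩
  · rw [pencil, pencil, hind.pair_smul_smul_iff_ne_zero, direction, direction]
    tauto
  · simp only [LinearMap.smul_apply, smul_eq_mul]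
    ring
  · rw [Ne, direction] at hma hmb
    rw [pencil, pencil, LinearMap.ker_smul _ _ hma, LinearMap.ker_smul _ _ hmb]
    refine ⟨hind.pair_smul_smul_iff_ne_zero.2 ⟨hma, hmb⟩, rfl, ?_⟩
    have := finrank_ker_inf_ker_add_two hind
    rw [Module.finrank_fin_fun] at this
    omega

/-- Second case of §1.2 (β-congruences): when both pencils degenerate with distinct
ratios (`f₁₁ = a • f₂₁`, `f₁₂ = b • f₂₂`, `a ≠ b`, `f₂₁, f₂₂` independent), there
are exactly two distinct developable directions, the focal conic is a pair of
distinct lines, and for every other direction the focal locus is the same single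
point, the singular point of the conic. -/
theorem two_pencils_degenerate_beta_case
    (f₂₁ f₂₂ : (Fin 3 → ℂ) →ₗ[ℂ] ℂ)
    (hind : LinearIndependent ℂ ![f₂₁, f₂₂])
    (a b : ℂ) (ha : a ≠ 0) (hb : b ≠ 0) (hab : a ≠ b)
    (f₁₁ f₁₂ : (Fin 3 → ℂ) →ₗ[ℂ] ℂ)
    (hf₁₁ : f₁₁ = a • f₂₁) (hf₁₂ : f₁₂ = b • f₂₂) :
    -- (1) exactly two distinct developable directions
    (∀ l m : ℂ, (l, m) ≠ ((0 : ℂ), (0 : ℂ)) →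
      (¬ LinearIndependent ℂ ![l • f₁₁ + m • f₂₁, l • f₁₂ + m • f₂₂] ↔
        (m = -a * l ∨ m = -b * l))) ∧
    -- (2) the focal conic is a nonzero product of two independent linear forms
    ((∀ x : Fin 3 → ℂ,
        f₁₁ x * f₂₂ x - f₁₂ x * f₂₁ x = (a - b) * (f₂₁ x * f₂₂ x)) ∧ a - b ≠ 0) ∧
    -- (3) for every other direction, the focal locus is the fixed singular point
    (∀ l m : ℂ, (l, m) ≠ ((0 : ℂ), (0 : ℂ)) → m ≠ -a * l → m ≠ -b * l →
      LinearIndependent ℂ ![l • f₁₁ + m • f₂₁, l • f₁₂ + m • f₂₂] ∧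
      (LinearMap.ker (l • f₁₁ + m • f₂₁) ⊓ LinearMap.ker (l • f₁₂ + m • f₂₂) :
          Submodule ℂ (Fin 3 → ℂ))
        = LinearMap.ker f₂₁ ⊓ LinearMap.ker f₂₂ ∧
      Module.finrank ℂ
        ((LinearMap.ker f₂₁ ⊓ LinearMap.ker f₂₂) : Submodule ℂ (Fin 3 → ℂ)) = 1) :=
  two_pencils_degenerate_beta_case_general f₂₁ f₂₂ hind a b hab f₁₁ f₁₂ hf₁₁ hf₁₂
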